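/- Let G be a graph whose number of non-adjacent pairs of vertices is at most k (so G can be completed to a clique by adding at most k edges), and suppose S ⊆ V(G) induces a d-colorable subgraph. If X ⊆ S is the set of vertices of S having at least one non-neighbor in S, then |X| ≤ (d + √(d² + 8dk))/2. -/

import Mathlib

/-!
A `d`-colorable graph on `n` vertices is `(d + 1)`-clique-free, so by Turán's theorem it has at
most `(d - 1) n² / (2d)` edges. Since its edges and non-edges together number `n (n - 1) / 2`,
this says `n² ≤ d n + 2 d m`, where `m` counts the non-edges. Applied to the subgraph induced
on `X ⊆ S`, whose non-edges are non-edges of `G`, and solved for `n`, this is the bound.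
-/

open Finset

theorem le_of_sq_le_mul_add {x a b : ℝ} (h : x ^ 2 ≤ a * x + b) :
    x ≤ (a + √(a ^ 2 + 4 * b)) / 2 := by
  have hroot : |2 * x - a| ≤ √(a ^ 2 + 4 * b) := Real.abs_le_sqrt (by nlinarith)
  linarith [le_abs_self (2 * x - a)]

namespace SimpleGraph

variable {V : Type*} [Fintype V] (G : SimpleGraph V)

theorem card_edgeFinset_compl_induce_le [DecidableEq V] [DecidableRel G.Adj] (s : Set V)
    [DecidablePred (· ∈ s)] :
    #(G.induce s)ᶜ.edgeFinset ≤ #Gᶜ.edgeFinset := by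
  rw [← card_edgeFinset_map (Function.Embedding.subtype _)]
  refine card_le_card (edgeFinset_mono ?_)
  rintro _ _ ⟨hne, u, v, huv, rfl, rfl⟩
  exact ⟨hne, huv.2⟩

variable [DecidableRel G.Adj]

theorem CliqueFree.two_mul_mul_card_edgeFinset_le {r : ℕ} (cf : G.CliqueFree (r + 1)) :
    2 * r * #G.edgeFinset ≤ (r - 1) * Fintype.card V ^ 2 := by
  rcases r.eq_zero_or_pos with rfl | hr
  · simp
  obtain ⟨H, _, maxH⟩ := exists_isTuranMaximal (V := V) hr
  calc 2 * r * #G.edgeFinset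
      ≤ 2 * r * #H.edgeFinset := Nat.mul_le_mul_left _ (maxH.2 cf)
    _ = 2 * r * #(turanGraph (Fintype.card V) r).edgeFinset := by
      rw [((isTuranMaximal_iff_nonempty_iso_turanGraph hr).mp maxH).some.card_edgeFinset_eq]
    _ ≤ (r - 1) * Fintype.card V ^ 2 := mul_card_edgeFinset_turanGraph_le

theorem card_edgeFinset_add_card_edgeFinset_compl [DecidableEq V] :
    #G.edgeFinset + #Gᶜ.edgeFinset = (Fintype.card V).choose 2 := by
  rw [← card_union_of_disjoint (disjoint_edgeFinset.2 disjoint_compl_right),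
    ← card_edgeFinset_top_eq_card_choose_two]
  congr 1
  rw [← coe_inj]
  simp [← edgeSet_sup]

theorem Colorable.sq_card_le [DecidableEq V] {d : ℕ} (hG : G.Colorable d) :
    Fintype.card V ^ 2 ≤ d * Fintype.card V + 2 * d * #Gᶜ.edgeFinset := by
  rcases d.eq_zero_or_pos with rfl | hd
  · have := colorable_zero_iff.1 hG
    simp
  have hturan := (hG.cliqueFree d.lt_add_one).two_mul_mul_card_edgeFinset_le
  have hsplit := congrArg (Nat.cast (R := ℚ)) G.card_edgeFinset_add_card_edgeFinset_compl
  rw [Nat.cast_add, Nat.cast_choose_two] at hsplit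
  qify [hd] at hturan ⊢
  nlinarith

end SimpleGraph

open SimpleGraph

theorem stmt4_general {V : Type*} [Fintype V] (G : SimpleGraph V) (d k : ℕ)
    (hk : Gᶜ.edgeSet.ncard ≤ k) (S : Set V)
    (hcol : ∃ c : V → Fin d, ∀ u ∈ S, ∀ v ∈ S, G.Adj u v → c u ≠ c v)
    (X : Set V) (hX : X = {v ∈ S | ∃ u ∈ S, u ≠ v ∧ ¬ G.Adj v u}) :
    (X.ncard : ℝ) ≤ ((d : ℝ) + Real.sqrt ((d : ℝ) ^ 2 + 8 * d * k)) / 2 := by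
  classical
  obtain ⟨c, hc⟩ := hcol
  have hXS : X ⊆ S := hX ▸ fun v hv => hv.1
  have hXcol : (G.induce X).Colorable d :=
    ⟨Coloring.mk (fun v => c v) fun {u v} h => hc u (hXS u.2) v (hXS v.2) h⟩
  have hXk : #(G.induce X)ᶜ.edgeFinset ≤ k := by
    refine (G.card_edgeFinset_compl_induce_le X).trans ?_
    rwa [← Set.ncard_coe_finset, coe_edgeFinset]
  have hsq := hXcol.sq_card_le
  rw [← Nat.card_coe_set_eq, Nat.card_eq_fintype_card]
  have hsqk : ((Fintype.card X : ℕ) : ℝ) ^ 2 ≤ d * Fintype.card X + 2 * d * k := by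
    exact_mod_cast hsq.trans (by gcongr)
  convert le_of_sq_le_mul_add hsqk using 4
  ring

/-- Let `G` have at most `k` non-adjacent pairs of vertices, and let `S` induce a
`d`-colorable subgraph. If `X` is the set of vertices of `S` having at least one
non-neighbor in `S`, then `|X| ≤ (d + √(d² + 8dk))/2`. -/
theorem stmt4 {V : Type*} [Fintype V] (G : SimpleGraph V) (d k : ℕ) (hd : 1 ≤ d)
    (hk : Gᶜ.edgeSet.ncard ≤ k) (S : Set V)
    (hcol : ∃ c : V → Fin d, ∀ u ∈ S, ∀ v ∈ S, G.Adj u v → c u ≠ c v)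
    (X : Set V) (hX : X = {v ∈ S | ∃ u ∈ S, u ≠ v ∧ ¬ G.Adj v u}) :
    (X.ncard : ℝ) ≤ ((d : ℝ) + Real.sqrt ((d : ℝ) ^ 2 + 8 * d * k)) / 2 :=
  stmt4_general G d k hk S hcol X hX
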